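/- Let R ⊆ S be an extension of commutative rings and F a submonoid of the regular elements of R whose elements are also regular in S. If the extension F⁻¹R ⊆ F⁻¹S is tight, then R ⊆ S is tight. -/

import Mathlib

/-- A ring extension `f : R →+* S` is *tight* if every nonzero ideal of `S` contracts to a
nonzero ideal of `R`. -/
def Tight {R S : Type*} [CommRing R] [CommRing S] (f : R →+* S) : Prop :=
  ∀ s : S, s ≠ 0 → ∃ t : S, ∃ r : R, r ≠ 0 ∧ s * t = f r

/-- The natural map `F⁻¹R →+* F⁻¹S` induced by `f : R →+* S` on localizations. -/
noncomputable def locMap {R S : Type*} [CommRing R] [CommRing S] (f : R →+* S)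
    (F : Submonoid R) : Localization F →+* Localization (F.map f) :=
  IsLocalization.map (Localization (F.map f)) f (Submonoid.le_comap_map F)

/-!
The square `R → F⁻¹R → F⁻¹S` = `R → S → F⁻¹S` commutes. Along the top, `R → F⁻¹R` is tight
(clear the denominator of a nonzero fraction) and tightness is stable under composition, so
`R → F⁻¹S` is tight. To descend to `S`, clear the denominator `f v` (with `v ∈ F`) of the
multiplier found in `F⁻¹S`: this is exact because `f(F)` is regular in `S`, and the new
element `r * v` of `R` stays nonzero because `v` is regular in `R`.
-/

theorem Tight.comp {R S T : Type*} [CommRing R] [CommRing S] [CommRing T]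
    {g : S →+* T} {f : R →+* S} (hg : Tight g) (hf : Tight f) : Tight (g.comp f) := by
  intro x hx
  obtain ⟨y, s, hs, hxy⟩ := hg x hx
  obtain ⟨t, r, hr, hst⟩ := hf s hs
  exact ⟨y * g t, r, hr, by rw [← mul_assoc, hxy, ← map_mul, hst, RingHom.comp_apply]⟩

theorem tight_algebraMap_of_isLocalization {R A : Type*} [CommRing R] [CommRing A]
    [Algebra R A] (M : Submonoid R) [IsLocalization M A] : Tight (algebraMap R A) := by
  intro x hx
  obtain ⟨⟨a, b⟩, hab⟩ := IsLocalization.surj M x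
  refine ⟨algebraMap R A b, a, ?_, hab⟩
  rintro rfl
  rw [map_zero, (IsLocalization.map_units A b).mul_left_eq_zero] at hab
  exact hx hab

theorem Tight.of_comp_algebraMap_of_isLocalization {R S B : Type*} [CommRing R] [CommRing S]
    [CommRing B] [Algebra S B] {f : R →+* S} {F : Submonoid R} [IsLocalization (F.map f) B]
    (hF : F ≤ nonZeroDivisors R) (hreg : F.map f ≤ nonZeroDivisors S)
    (h : Tight ((algebraMap S B).comp f)) : Tight f := by
  intro s hs
  have hinjS : Function.Injective (algebraMap S B) := IsLocalization.injective B hreg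
  obtain ⟨t', r, hr, hst'⟩ := h (algebraMap S B s) ((map_ne_zero_iff _ hinjS).mpr hs)
  obtain ⟨⟨u, ⟨_, v, hv, rfl⟩⟩, hu⟩ := IsLocalization.surj (F.map f) t'
  refine ⟨u, r * v, (mul_right_mem_nonZeroDivisors_eq_zero_iff (hF hv)).not.mpr hr, ?_⟩
  apply hinjS
  rw [map_mul, ← hu, ← mul_assoc, hst', map_mul, map_mul, RingHom.comp_apply]

theorem locMap_comp_algebraMap {R S : Type*} [CommRing R] [CommRing S] (f : R →+* S)
    (F : Submonoid R) :
    (locMap f F).comp (algebraMap R (Localization F)) =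
      (algebraMap S (Localization (F.map f))).comp f :=
  IsLocalization.map_comp _

theorem tight_of_tight_localization_general (R S : Type*) [CommRing R] [CommRing S]
    (f : R →+* S)
    (F : Submonoid R) (hF : F ≤ nonZeroDivisors R)
    (hreg : ∀ x ∈ F, f x ∈ nonZeroDivisors S)
    (ht : Tight (locMap f F)) : Tight f := by
  have hFS : F.map f ≤ nonZeroDivisors S := by
    rintro _ ⟨x, hx, rfl⟩
    exact hreg x hx
  have hcomp : Tight ((algebraMap S (Localization (F.map f))).comp f) := by
    rw [← locMap_comp_algebraMap]
    exact ht.comp (tight_algebraMap_of_isLocalization F)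
  exact Tight.of_comp_algebraMap_of_isLocalization hF hFS hcomp

/-- If the elements of `F ⊆ reg(R)` are regular in `S` and `F⁻¹R ⊆ F⁻¹S` is tight,
then `R ⊆ S` is tight. -/
theorem tight_of_tight_localization (R S : Type*) [CommRing R] [CommRing S]
    (f : R →+* S) (hinj : Function.Injective f)
    (F : Submonoid R) (hF : F ≤ nonZeroDivisors R)
    (hreg : ∀ x ∈ F, f x ∈ nonZeroDivisors S)
    (ht : Tight (locMap f F)) : Tight f :=
  tight_of_tight_localization_general R S f F hF hreg ht
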